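/- Complete growth series of a free product: Let G and H be groups with finite symmetric generating sets S and T respectively, and equip the free product G ∗ H with the finite symmetric generating set consisting of the images of S and of T under the canonical inclusions. Each of the power series CG_{G∗H}(z), ι_G(CG_{G,S}(z)) and ι_H(CG_{H,T}(z)) has constant coefficient 1 and hence is a unit of the power series ring (ℤ[G∗H])[[z]], and they satisfy CG_{G∗H}(z)⁻¹ = ι_G(CG_{G,S}(z))⁻¹ + ι_H(CG_{H,T}(z))⁻¹ − 1, where ι_G and ι_H denote the maps on power series induced coefficientwise by the ring homomorphisms ℤ[G] → ℤ[G∗H] and ℤ[H] → ℤ[G∗H] coming from the canonical inclusions G → G∗H and H → G∗H. -/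

import Mathlib

/-- The word norm of `g` with respect to a generating set `S`. -/
noncomputable def wordNorm {G : Type*} [Group G] (S : Set G) (g : G) : ℕ :=
  sInf {n | ∃ l : List G, (∀ s ∈ l, s ∈ S) ∧ l.length = n ∧ l.prod = g}

/-- The complete growth series `CG_{G,S}(z) ∈ (ℤ[G])[[z]]`: the coefficient of `z^n`
is the sum `Σ_{‖g‖_S = n} g` in the group ring `ℤ[G]`. -/
noncomputable def completeGrowthSeries {G : Type*} [Group G] (S : Set G) :
    PowerSeries (MonoidAlgebra ℤ G) :=
  PowerSeries.mk fun n => ∑ᶠ g ∈ {g : G | wordNorm S g = n}, MonoidAlgebra.of ℤ G g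

/-!
The formula holds for any finite free product `∗ᵢ Gᵢ`, in the form `CG⁻¹ = Σᵢ CGᵢ⁻¹ + 1 - n`,
where `CGᵢ` is the image of `CG_{Gᵢ,Sᵢ}` in `ℤ[∗ᵢ Gᵢ]⟦z⟧`; `G ∗ H` is the case of the index set
`Bool`, with `G` and `H` lifted to a common universe.

An element of `∗ᵢ Gᵢ` is a unique reduced word, and its length with respect to `⋃ᵢ Sᵢ` is the
sum of the `Sᵢ`-lengths of its letters: multiplying by a generator changes only the first letter,
and that sum by at most one. Hence splitting off the (possibly trivial) `Gᵢ`-letter in front is a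
length-additive bijection `Gᵢ × {words not starting in Gᵢ} ≃ ∗ᵢ Gᵢ`, so `CG = CGᵢ · (CG - Xᵢ)`,
where `Xᵢ` is the series of the words starting in `Gᵢ`. As `CG = 1 + Σᵢ Xᵢ`, summing
`CGᵢ⁻¹ CG = CG - Xᵢ` over `i` gives `(Σᵢ CGᵢ⁻¹ + 1 - n) CG = 1`.
-/

section WordNorm

variable {G : Type*} [Group G] {S : Set G}

theorem wordNorm_le_length {l : List G} (hl : ∀ s ∈ l, s ∈ S) : wordNorm S l.prod ≤ l.length :=
  Nat.sInf_le ⟨l, hl, rfl, rfl⟩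

theorem exists_list_length_eq_wordNorm (hS : Submonoid.closure S = ⊤) (g : G) :
    ∃ l : List G, (∀ s ∈ l, s ∈ S) ∧ l.length = wordNorm S g ∧ l.prod = g := by
  obtain ⟨l, hl, rfl⟩ := Submonoid.exists_list_of_mem_closure (hS ▸ Submonoid.mem_top g)
  exact Nat.sInf_mem
    (s := {n | ∃ l' : List G, (∀ s ∈ l', s ∈ S) ∧ l'.length = n ∧ l'.prod = l.prod})
    ⟨_, l, hl, rfl, rfl⟩

@[simp]
theorem wordNorm_one : wordNorm S 1 = 0 :=
  Nat.le_zero.1 (wordNorm_le_length (l := []) (by simp))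

theorem wordNorm_le_one {s : G} (hs : s ∈ S) : wordNorm S s ≤ 1 := by
  simpa using wordNorm_le_length (S := S) (l := [s]) (by simpa)

theorem wordNorm_mul_le (hS : Submonoid.closure S = ⊤) (g h : G) :
    wordNorm S (g * h) ≤ wordNorm S g + wordNorm S h := by
  obtain ⟨l, hl, hlen, rfl⟩ := exists_list_length_eq_wordNorm hS g
  obtain ⟨l', hl', hlen', rfl⟩ := exists_list_length_eq_wordNorm hS h
  simpa [hlen, hlen'] using wordNorm_le_length (S := S) (l := l ++ l')
    fun s hs => (List.mem_append.1 hs).elim (hl s) (hl' s)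

theorem eq_one_of_wordNorm_eq_zero (hS : Submonoid.closure S = ⊤) {g : G}
    (hg : wordNorm S g = 0) : g = 1 := by
  obtain ⟨l, -, hlen, rfl⟩ := exists_list_length_eq_wordNorm hS g
  simp_all

theorem finite_setOf_wordNorm_eq (hfin : S.Finite) (hS : Submonoid.closure S = ⊤) (n : ℕ) :
    {g | wordNorm S g = n}.Finite := by
  have : Finite S := hfin.to_subtype
  refine (Set.finite_range fun f : Fin n → S => (List.ofFn fun i => (f i : G)).prod).subset ?_
  intro g hg
  obtain ⟨l, hl, hlen, rfl⟩ := exists_list_length_eq_wordNorm hS g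
  subst hg
  refine ⟨fun i => ⟨l.get (i.cast hlen.symm), hl _ (l.get_mem _)⟩, ?_⟩
  show (List.ofFn _).prod = _
  congr 1
  apply List.ext_get <;> simp [hlen]

theorem wordNorm_map_le {K : Type*} [Group K] {T : Set K} (hS : Submonoid.closure S = ⊤)
    (φ : G →* K) (hST : φ '' S ⊆ T) (g : G) : wordNorm T (φ g) ≤ wordNorm S g := by
  obtain ⟨l, hl, hlen, rfl⟩ := exists_list_length_eq_wordNorm hS g
  simpa [hlen, map_list_prod] using wordNorm_le_length (S := T) (l := l.map φ)
    (List.forall_mem_map.2 fun s hs => hST (Set.mem_image_of_mem φ (hl s hs)))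

theorem wordNorm_image_mulEquiv {K : Type*} [Group K] (e : G ≃* K) (g : G) :
    wordNorm (e '' S) (e g) = wordNorm S g := by
  unfold wordNorm
  congr 1
  ext n
  constructor
  · rintro ⟨l, hl, rfl, hprod⟩
    refine ⟨l.map e.symm, List.forall_mem_map.2 fun t ht => ?_, by simp,
      by simp [← map_list_prod, hprod]⟩
    obtain ⟨s, hs, rfl⟩ := hl t ht
    simpa using hs
  · rintro ⟨l, hl, rfl, rfl⟩
    exact ⟨l.map e, List.forall_mem_map.2 fun s hs => Set.mem_image_of_mem e (hl s hs), by simp,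
      by simp [map_list_prod]⟩

theorem Submonoid.closure_eq_top_of_inv_eq (hsym : S⁻¹ = S) (hgen : Subgroup.closure S = ⊤) :
    Submonoid.closure S = ⊤ := by
  rw [← Subgroup.top_toSubmonoid, ← hgen, Subgroup.closure_toSubmonoid, hsym, Set.union_self]

theorem Submonoid.closure_image_mulEquiv_eq_top {K : Type*} [Group K]
    (hS : Submonoid.closure S = ⊤) (e : G ≃* K) : Submonoid.closure (e '' S) = ⊤ := by
  rw [← MonoidHom.map_mclosure, hS]
  exact Submonoid.map_equiv_top e

end WordNorm

section WeightedSeries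

open PowerSeries Finset Function

variable {K L : Type*} [Monoid K] [Monoid L] {α β : Type*}

/-- An infinite fibre of `ν` gives the junk coefficient `0`; the lemmas below assume finite
fibres. -/
noncomputable def weightedSeries (f : α → K) (ν : α → ℕ) : PowerSeries (MonoidAlgebra ℤ K) :=
  PowerSeries.mk fun n => ∑ᶠ a ∈ {a | ν a = n}, MonoidAlgebra.of ℤ K (f a)

theorem completeGrowthSeries_eq_weightedSeries {G : Type*} [Group G] (S : Set G) :
    completeGrowthSeries S = weightedSeries id (wordNorm S) :=
  rfl

theorem coeff_weightedSeries_eq_finsum (f : α → K) (ν : α → ℕ) (n : ℕ) :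
    coeff n (weightedSeries f ν) = ∑ᶠ a ∈ {a | ν a = n}, MonoidAlgebra.of ℤ K (f a) :=
  coeff_mk _ _

theorem coeff_weightedSeries {f : α → K} {ν : α → ℕ} {n : ℕ} (hν : {a | ν a = n}.Finite) :
    coeff n (weightedSeries f ν) = ∑ a ∈ hν.toFinset, MonoidAlgebra.of ℤ K (f a) := by
  rw [coeff_weightedSeries_eq_finsum, finsum_mem_eq_finite_toFinset_sum]

theorem weightedSeries_comp_equiv (f : α → K) (ν : α → ℕ) (e : β ≃ α) :
    weightedSeries (f ∘ e) (ν ∘ e) = weightedSeries f ν := by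
  refine PowerSeries.ext fun n => ?_
  simp only [coeff_weightedSeries_eq_finsum]
  exact finsum_mem_eq_of_bijOn e (e.bijOn fun _ => Iff.rfl) fun _ _ => rfl

theorem map_weightedSeries (φ : K →* L) {f : α → K} {ν : α → ℕ}
    (hν : ∀ n, {a | ν a = n}.Finite) :
    PowerSeries.map (MonoidAlgebra.mapDomainRingHom ℤ φ) (weightedSeries f ν) =
      weightedSeries (φ ∘ f) ν := by
  refine PowerSeries.ext fun n => ?_
  rw [coeff_map, coeff_weightedSeries (hν n), coeff_weightedSeries (hν n), map_sum]
  simp [MonoidAlgebra.of_apply, MonoidAlgebra.mapDomain_single]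

theorem weightedSeries_mul {f : α → K} {ν : α → ℕ} {g : β → K} {μ : β → ℕ}
    (hν : ∀ n, {a | ν a = n}.Finite) (hμ : ∀ n, {b | μ b = n}.Finite) :
    weightedSeries f ν * weightedSeries g μ =
      weightedSeries (fun p : α × β => f p.1 * g p.2) (fun p => ν p.1 + μ p.2) := by
  refine PowerSeries.ext fun n => ?_
  have hfibre : {p : α × β | ν p.1 + μ p.2 = n} =
      ⋃ ij ∈ (antidiagonal n : Set (ℕ × ℕ)), {a | ν a = ij.1} ×ˢ {b | μ b = ij.2} := by
    ext p; simp
  have hdisj : (antidiagonal n : Set (ℕ × ℕ)).PairwiseDisjoint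
      fun ij => {a | ν a = ij.1} ×ˢ {b | μ b = ij.2} := by
    intro ij _ kl _ hne
    refine Set.disjoint_left.2 fun p hp hp' => hne ?_
    simp only [Set.mem_prod] at hp hp'
    exact Prod.ext (hp.1.symm.trans hp'.1) (hp.2.symm.trans hp'.2)
  rw [coeff_mul, coeff_weightedSeries_eq_finsum, hfibre,
    finsum_mem_biUnion hdisj (Finset.finite_toSet _) fun ij _ => (hν _).prod (hμ _),
    finsum_mem_coe_finset]
  refine Finset.sum_congr rfl fun ij _ => ?_
  rw [coeff_weightedSeries (hν _), coeff_weightedSeries (hμ _), Finset.sum_mul_sum,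
    finsum_mem_eq_finite_toFinset_sum _ ((hν _).prod (hμ _)), ← (hν _).toFinset_prod (hμ _),
    Finset.sum_product]
  simp

theorem weightedSeries_sum_elim {f : α → K} {ν : α → ℕ} {g : β → K} {μ : β → ℕ}
    (hν : ∀ n, {a | ν a = n}.Finite) (hμ : ∀ n, {b | μ b = n}.Finite) :
    weightedSeries (Sum.elim f g) (Sum.elim ν μ) = weightedSeries f ν + weightedSeries g μ := by
  refine PowerSeries.ext fun n => ?_
  have hfibre : {x | Sum.elim ν μ x = n} = Sum.inl '' {a | ν a = n} ∪ Sum.inr '' {b | μ b = n} := by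
    ext (a | b) <;> simp
  simp only [map_add, coeff_weightedSeries_eq_finsum]
  rw [hfibre, finsum_mem_union (Set.disjoint_left.2 (by simp)) ((hν n).image _) ((hμ n).image _),
    finsum_mem_image Sum.inl_injective.injOn, finsum_mem_image Sum.inr_injective.injOn]
  rfl

theorem weightedSeries_sigma {ι : Type*} [Fintype ι] {α : ι → Type*} {f : (Σ i, α i) → K}
    {ν : (Σ i, α i) → ℕ} (hν : ∀ i n, {a | ν ⟨i, a⟩ = n}.Finite) :
    weightedSeries f ν = ∑ i, weightedSeries (fun a => f ⟨i, a⟩) fun a => ν ⟨i, a⟩ := by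
  refine PowerSeries.ext fun n => ?_
  have hfibre : {x | ν x = n} = ⋃ i, Sigma.mk i '' {a | ν ⟨i, a⟩ = n} := by
    ext ⟨i, a⟩
    simp only [Set.mem_iUnion, Set.mem_image]
    exact ⟨fun h => ⟨i, a, h, rfl⟩, fun ⟨j, b, h, hb⟩ => hb ▸ h⟩
  have hdisj : Pairwise (Disjoint on fun i => Sigma.mk i '' {a | ν ⟨i, a⟩ = n}) := by
    intro i j hij
    refine Set.disjoint_left.2 fun x hx hx' => hij ?_
    obtain ⟨a, -, rfl⟩ := hx
    obtain ⟨b, -, hb⟩ := hx'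
    exact (congrArg Sigma.fst hb).symm
  simp only [map_sum, coeff_weightedSeries_eq_finsum]
  rw [hfibre, finsum_mem_iUnion hdisj fun i => (hν i n).image _, finsum_eq_sum_of_fintype]
  exact Finset.sum_congr rfl fun i _ => finsum_mem_image sigma_mk_injective.injOn

theorem weightedSeries_unique [Unique α] (f : α → K) (ν : α → ℕ) :
    weightedSeries f ν = monomial (ν default) (MonoidAlgebra.of ℤ K (f default)) := by
  refine PowerSeries.ext fun n => ?_
  rw [coeff_weightedSeries_eq_finsum, coeff_monomial,
    finsum_eq_single _ default fun a ha => (ha (Unique.eq_default a)).elim, finsum_eq_if]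
  exact if_congr eq_comm rfl rfl

end WeightedSeries

section ConstantCoeff

open PowerSeries

theorem constantCoeff_completeGrowthSeries {G : Type*} [Group G] {S : Set G}
    (hS : Submonoid.closure S = ⊤) : constantCoeff (completeGrowthSeries S) = 1 := by
  have hsphere : {g : G | wordNorm S g = 0} = {1} :=
    Set.ext fun g => ⟨eq_one_of_wordNorm_eq_zero hS, fun hg => hg ▸ wordNorm_one⟩
  rw [← coeff_zero_eq_constantCoeff_apply, completeGrowthSeries, coeff_mk, hsphere,
    finsum_mem_singleton, map_one]

theorem constantCoeff_map_completeGrowthSeries {G K : Type*} [Group G] [Monoid K] {S : Set G}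
    (hS : Submonoid.closure S = ⊤) (φ : G →* K) :
    constantCoeff (map (MonoidAlgebra.mapDomainRingHom ℤ φ) (completeGrowthSeries S)) = 1 := by
  rw [← coeff_zero_eq_constantCoeff_apply, coeff_map, coeff_zero_eq_constantCoeff_apply,
    constantCoeff_completeGrowthSeries hS, map_one]

theorem isUnit_completeGrowthSeries {G : Type*} [Group G] {S : Set G}
    (hS : Submonoid.closure S = ⊤) : IsUnit (completeGrowthSeries S) :=
  isUnit_iff_constantCoeff.2 (constantCoeff_completeGrowthSeries hS ▸ isUnit_one)

theorem isUnit_map_completeGrowthSeries {G K : Type*} [Group G] [Monoid K] {S : Set G}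
    (hS : Submonoid.closure S = ⊤) (φ : G →* K) :
    IsUnit (map (MonoidAlgebra.mapDomainRingHom ℤ φ) (completeGrowthSeries S)) :=
  isUnit_iff_constantCoeff.2 (constantCoeff_map_completeGrowthSeries hS φ ▸ isUnit_one)

end ConstantCoeff

theorem map_ringInverse_of_isUnit {M₀ N₀ F : Type*} [MonoidWithZero M₀] [MonoidWithZero N₀]
    [FunLike F M₀ N₀] [MonoidHomClass F M₀ N₀] (f : F) {x : M₀} (hx : IsUnit x) :
    f (Ring.inverse x) = Ring.inverse (f x) := by
  obtain ⟨u, rfl⟩ := hx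
  have hfu : f u = (Units.map (f : M₀ →* N₀) u : N₀) := rfl
  rw [hfu, Ring.inverse_unit, Ring.inverse_unit, Units.coe_map_inv, MonoidHom.coe_coe]

namespace Monoid.CoprodI

open Word PowerSeries

variable {ι : Type*} {G : ι → Type*} [∀ i, Group (G i)] {S : ∀ i, Set (G i)}

theorem closure_iUnion_image_of_eq_top (hS : ∀ i, Submonoid.closure (S i) = ⊤) :
    Submonoid.closure (⋃ i, of '' S i) = ⊤ := by
  rw [eq_top_iff, ← mclosure_iUnion_range_of, Submonoid.closure_le]
  refine Set.iUnion_subset fun i => ?_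
  rintro _ ⟨g, rfl⟩
  have hg : of g ∈ (Submonoid.closure (S i)).map of := ⟨g, hS i ▸ Submonoid.mem_top g, rfl⟩
  rw [MonoidHom.map_mclosure] at hg
  exact Submonoid.closure_mono (Set.subset_iUnion (fun i => of '' S i) i) hg

variable (S) in
noncomputable def Word.syllableNorm (w : Word G) : ℕ :=
  (w.toList.map fun l => wordNorm (S l.1) l.2).sum

variable (S) in
noncomputable def Word.growthSeriesOn (p : Word G → Prop) :
    PowerSeries (MonoidAlgebra ℤ (CoprodI G)) :=
  weightedSeries (fun w : {w : Word G // p w} => w.1.prod) fun w => syllableNorm S w.1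

namespace Word

theorem syllableNorm_cons {i : ι} (m : G i) (w : Word G) (hmw : w.fstIdx ≠ some i) (h1 : m ≠ 1) :
    syllableNorm S (cons m w hmw h1) = wordNorm (S i) m + syllableNorm S w := by
  simp [syllableNorm, cons]

theorem syllableNorm_rcons [∀ i, DecidableEq (G i)] {i : ι} (p : Pair G i) :
    syllableNorm S (rcons p) = wordNorm (S i) p.head + syllableNorm S p.tail := by
  by_cases h : p.head = 1
  · rw [rcons, dif_pos h, h, wordNorm_one, zero_add]
  · rw [rcons, dif_neg h, syllableNorm_cons]

section Decidable

variable [DecidableEq ι] [∀ i, DecidableEq (G i)]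

theorem syllableNorm_eq_equivPair (i : ι) (w : Word G) :
    syllableNorm S w =
      wordNorm (S i) (equivPair i w).head + syllableNorm S (equivPair i w).tail := by
  rw [← syllableNorm_rcons, ← equivPair_symm, Equiv.symm_apply_apply]

theorem syllableNorm_of_smul_le (hS : ∀ i, Submonoid.closure (S i) = ⊤) {i : ι} {m : G i}
    (hm : m ∈ S i) (w : Word G) : syllableNorm S (of m • w) ≤ syllableNorm S w + 1 := by
  rw [of_smul_def, syllableNorm_rcons, syllableNorm_eq_equivPair i w]
  have := wordNorm_mul_le (hS i) m (equivPair i w).head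
  have := wordNorm_le_one hm
  dsimp only
  omega

theorem syllableNorm_equiv_prod_le (hS : ∀ i, Submonoid.closure (S i) = ⊤)
    (l : List (CoprodI G)) (hl : ∀ s ∈ l, s ∈ ⋃ i, of '' S i) :
    syllableNorm S (equiv l.prod) ≤ l.length := by
  induction l with
  | nil => simp [equiv, syllableNorm]
  | cons s l ih =>
    obtain ⟨i, m, hm, rfl⟩ : ∃ i, ∃ m ∈ S i, of m = s := by simpa using hl s (by simp)
    have hsmul : equiv (of m * l.prod) = of m • equiv l.prod :=
      mul_smul (of m) l.prod (empty : Word G)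
    rw [List.prod_cons, hsmul, List.length_cons]
    exact (syllableNorm_of_smul_le hS hm _).trans
      (Nat.add_le_add_right (ih fun s hs => hl s (by simp [hs])) 1)

end Decidable

theorem wordNorm_prod (hS : ∀ i, Submonoid.closure (S i) = ⊤) (w : Word G) :
    wordNorm (⋃ i, of '' S i) w.prod = syllableNorm S w := by
  classical
  apply le_antisymm
  · induction w using consRecOn with
    | empty => simp [syllableNorm]
    | cons i m w h1 h2 ih =>
      rw [prod_cons, syllableNorm_cons]
      exact (wordNorm_mul_le (closure_iUnion_image_of_eq_top hS) _ _).trans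
        (add_le_add (wordNorm_map_le (hS i) of (Set.subset_iUnion (fun i => of '' S i) i) m) ih)
  · obtain ⟨l, hl, hlen, hprod⟩ :=
      exists_list_length_eq_wordNorm (closure_iUnion_image_of_eq_top hS) w.prod
    calc syllableNorm S w = syllableNorm S (equiv l.prod) := by
          rw [hprod]; exact congrArg _ (equiv.apply_symm_apply w).symm
      _ ≤ l.length := syllableNorm_equiv_prod_le hS l hl
      _ = _ := hlen

theorem eq_empty_of_fstIdx_eq_none {w : Word G} (h : fstIdx w = none) : w = empty :=
  Word.ext (by simpa [fstIdx] using h)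

def pairEquivProd (i : ι) : Pair G i ≃ G i × {w : Word G // fstIdx w ≠ some i} where
  toFun p := (p.head, ⟨p.tail, p.fstIdx_ne⟩)
  invFun x := ⟨x.1, x.2.1, x.2.2⟩

section Finite

variable [Finite ι] (hfin : ∀ i, (S i).Finite) (hS : ∀ i, Submonoid.closure (S i) = ⊤)
include hfin hS

theorem finite_setOf_syllableNorm_eq (p : Word G → Prop) (n : ℕ) :
    {w : {w : Word G // p w} | syllableNorm S w.1 = n}.Finite := by
  classical
  have hU := finite_setOf_wordNorm_eq (Set.finite_iUnion fun i => (hfin i).image of)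
    (closure_iUnion_image_of_eq_top hS) n
  refine (hU.preimage (f := fun w : {w : Word G // p w} => w.1.prod)
    (equiv.symm.injective.comp Subtype.val_injective).injOn).subset fun w hw => ?_
  simpa [wordNorm_prod hS] using hw

theorem weightedSeries_prod_eq_add (p : Word G → Prop) :
    weightedSeries prod (syllableNorm S) = growthSeriesOn S p + growthSeriesOn S (¬ p ·) := by
  classical
  rw [← weightedSeries_comp_equiv _ _ (Equiv.sumCompl p), growthSeriesOn, growthSeriesOn,
    ← weightedSeries_sum_elim (finite_setOf_syllableNorm_eq hfin hS p)
      (finite_setOf_syllableNorm_eq hfin hS _)]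
  congr 1 <;> funext w <;> cases w <;> rfl

theorem map_completeGrowthSeries_mul_growthSeriesOn (i : ι) :
    map (MonoidAlgebra.mapDomainRingHom ℤ of) (completeGrowthSeries (S i)) *
        growthSeriesOn S (fstIdx · ≠ some i) =
      weightedSeries prod (syllableNorm S) := by
  classical
  rw [completeGrowthSeries_eq_weightedSeries,
    map_weightedSeries _ (finite_setOf_wordNorm_eq (hfin i) (hS i)), growthSeriesOn,
    weightedSeries_mul (finite_setOf_wordNorm_eq (hfin i) (hS i))
      (finite_setOf_syllableNorm_eq hfin hS _),
    ← weightedSeries_comp_equiv prod (syllableNorm S)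
      ((pairEquivProd i).symm.trans (equivPair i).symm)]
  congr 1 <;> funext ⟨g, w, hw⟩
  · exact (prod_rcons ⟨g, w, hw⟩).symm
  · exact (syllableNorm_rcons ⟨g, w, hw⟩).symm

end Finite

theorem weightedSeries_prod_eq_one_add_sum [Fintype ι] (hfin : ∀ i, (S i).Finite)
    (hS : ∀ i, Submonoid.closure (S i) = ⊤) :
    weightedSeries prod (syllableNorm S) = 1 + ∑ i, growthSeriesOn S (fstIdx · = some i) := by
  rw [← weightedSeries_comp_equiv _ _ (Equiv.sigmaFiberEquiv fstIdx),
    weightedSeries_sigma fun o => finite_setOf_syllableNorm_eq hfin hS (fstIdx · = o),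
    Fintype.sum_option]
  let : Unique {w : Word G // fstIdx w = none} :=
    ⟨⟨⟨empty, rfl⟩⟩, fun w => Subtype.ext (eq_empty_of_fstIdx_eq_none w.2)⟩
  congr 1
  rw [weightedSeries_unique]
  show monomial (syllableNorm S empty) (MonoidAlgebra.of ℤ _ (prod empty)) = 1
  simp [syllableNorm, ← MonoidAlgebra.one_def]

end Word

theorem completeGrowthSeries_iUnion_image_of (hS : ∀ i, Submonoid.closure (S i) = ⊤) :
    completeGrowthSeries (⋃ i, of '' S i) = weightedSeries Word.prod (syllableNorm S) := by
  classical
  rw [completeGrowthSeries_eq_weightedSeries, ← weightedSeries_comp_equiv _ _ equiv.symm]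
  congr 1
  funext w
  exact wordNorm_prod hS w

theorem ringInverse_completeGrowthSeries [Fintype ι] (hfin : ∀ i, (S i).Finite)
    (hS : ∀ i, Submonoid.closure (S i) = ⊤) :
    Ring.inverse (completeGrowthSeries (⋃ i, of '' S i)) =
      ∑ i, Ring.inverse (map (MonoidAlgebra.mapDomainRingHom ℤ of) (completeGrowthSeries (S i))) +
        1 - Fintype.card ι := by
  classical
  set A := completeGrowthSeries (⋃ i, of '' S i)
  set B := fun i => map (MonoidAlgebra.mapDomainRingHom ℤ of) (completeGrowthSeries (S i))
  set X := fun i => growthSeriesOn S (fstIdx · = some i)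
  have hA : A = weightedSeries prod (syllableNorm S) := completeGrowthSeries_iUnion_image_of hS
  have hBA (i : ι) : Ring.inverse (B i) * A = A - X i := by
    have hT : A - X i = growthSeriesOn S (fstIdx · ≠ some i) := by
      rw [hA, weightedSeries_prod_eq_add hfin hS (fstIdx · = some i), add_sub_cancel_left]
    rw [Ring.inverse_mul_eq_iff_eq_mul _ _ _ (isUnit_map_completeGrowthSeries (hS i) of), hT]
    exact hA.trans (map_completeGrowthSeries_mul_growthSeriesOn hfin hS i).symm
  have hAX : A = 1 + ∑ i, X i := hA.trans (weightedSeries_prod_eq_one_add_sum hfin hS)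
  suffices key : (∑ i, Ring.inverse (B i) + 1 - Fintype.card ι) * A = 1 from
    (((Ring.eq_mul_inverse_iff_mul_eq _ 1 _
      (isUnit_completeGrowthSeries (closure_iUnion_image_of_eq_top hS))).2 key).trans
        (one_mul _)).symm
  calc (∑ i, Ring.inverse (B i) + 1 - Fintype.card ι) * A
      = Fintype.card ι * A - ∑ i, X i + A - Fintype.card ι * A := by
        rw [sub_mul, add_mul, Finset.sum_mul, Finset.sum_congr rfl fun i _ => hBA i,
          Finset.sum_sub_distrib, Finset.sum_const, Finset.card_univ, nsmul_eq_mul, one_mul]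
    _ = A - ∑ i, X i := by abel
    _ = 1 := by rw [hAX, add_sub_cancel_right]

end Monoid.CoprodI

section Transfer

open PowerSeries MonoidAlgebra

variable {K L M : Type*} [Group K] [Group L] [Group M]

theorem map_completeGrowthSeries_mulEquiv {U : Set K} (hfin : U.Finite)
    (hU : Submonoid.closure U = ⊤) (e : K ≃* L) :
    map (mapDomainRingHom ℤ (e : K →* L)) (completeGrowthSeries U) =
      completeGrowthSeries (e '' U) := by
  rw [completeGrowthSeries_eq_weightedSeries,
    map_weightedSeries _ (finite_setOf_wordNorm_eq hfin hU),
    completeGrowthSeries_eq_weightedSeries, ← weightedSeries_comp_equiv id _ e.toEquiv]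
  congr 1
  funext k
  exact (wordNorm_image_mulEquiv e k).symm

theorem map_mapDomainRingHom_map_mapDomainRingHom (f : K →* L) (g : L →* M)
    (x : PowerSeries (MonoidAlgebra ℤ K)) :
    map (mapDomainRingHom ℤ g) (map (mapDomainRingHom ℤ f) x) =
      map (mapDomainRingHom ℤ (g.comp f)) x := by
  rw [mapDomainRingHom_comp, map_comp]
  rfl

end Transfer

namespace Monoid.Coprod

universe u v

variable {G : Type u} {H : Type v} [Group G] [Group H] {S : Set G} {T : Set H}

abbrev boolFamily (G : Type u) (H : Type v) (b : Bool) : Type (max u v) :=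
  cond b (ULift.{v} G) (ULift.{u} H)

instance : (b : Bool) → Group (boolFamily G H b)
  | true => inferInstanceAs (Group (ULift G))
  | false => inferInstanceAs (Group (ULift H))

def boolFamilyGens (S : Set G) (T : Set H) : (b : Bool) → Set (boolFamily G H b)
  | true => (MulEquiv.ulift.symm : G ≃* ULift G) '' S
  | false => (MulEquiv.ulift.symm : H ≃* ULift H) '' T

variable (G H) in
def equivCoprodI : G ∗ H ≃* CoprodI (boolFamily G H) :=
  MonoidHom.toMulEquiv
    (lift ((CoprodI.of (i := true)).comp ((MulEquiv.ulift.symm : G ≃* ULift G) : G →* ULift G))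
      ((CoprodI.of (i := false)).comp ((MulEquiv.ulift.symm : H ≃* ULift H) : H →* ULift H)))
    (CoprodI.lift fun
      | true => inl.comp ((MulEquiv.ulift : ULift G ≃* G) : ULift G →* G)
      | false => inr.comp ((MulEquiv.ulift : ULift H ≃* H) : ULift H →* H))
    (hom_ext (MonoidHom.ext fun _ => by simp [CoprodI.lift_of])
      (MonoidHom.ext fun _ => by simp [CoprodI.lift_of]))
    (CoprodI.ext_hom _ _ fun b => by cases b <;> exact MonoidHom.ext fun _ => by simp)

theorem equivCoprodI_symm_comp_of_true :
    ((equivCoprodI G H).symm : CoprodI (boolFamily G H) →* G ∗ H).comp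
      ((CoprodI.of (i := true)).comp ((MulEquiv.ulift.symm : G ≃* ULift G) : G →* ULift G)) =
      inl :=
  MonoidHom.ext fun _ => by simp [equivCoprodI]

theorem equivCoprodI_symm_comp_of_false :
    ((equivCoprodI G H).symm : CoprodI (boolFamily G H) →* G ∗ H).comp
      ((CoprodI.of (i := false)).comp ((MulEquiv.ulift.symm : H ≃* ULift H) : H →* ULift H)) =
      inr :=
  MonoidHom.ext fun _ => by simp [equivCoprodI]

theorem image_equivCoprodI_symm (S : Set G) (T : Set H) :
    (equivCoprodI G H).symm '' ⋃ b, CoprodI.of '' boolFamilyGens S T b =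
      (inl : G →* G ∗ H) '' S ∪ (inr : H →* G ∗ H) '' T := by
  rw [Set.image_iUnion, Set.union_eq_iUnion]
  congr 1
  funext b
  cases b <;> simp [boolFamilyGens, Set.image_image, equivCoprodI]

theorem finite_boolFamilyGens (hSfin : S.Finite) (hTfin : T.Finite) (b : Bool) :
    (boolFamilyGens S T b).Finite :=
  b.rec (hTfin.image _) (hSfin.image _)

theorem closure_boolFamilyGens_eq_top (hS : Submonoid.closure S = ⊤)
    (hT : Submonoid.closure T = ⊤) (b : Bool) : Submonoid.closure (boolFamilyGens S T b) = ⊤ :=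
  b.rec (Submonoid.closure_image_mulEquiv_eq_top hT _)
    (Submonoid.closure_image_mulEquiv_eq_top hS _)

theorem closure_image_inl_union_image_inr_eq_top (hS : Submonoid.closure S = ⊤)
    (hT : Submonoid.closure T = ⊤) :
    Submonoid.closure ((inl : G →* G ∗ H) '' S ∪ (inr : H →* G ∗ H) '' T) = ⊤ :=
  image_equivCoprodI_symm S T ▸ Submonoid.closure_image_mulEquiv_eq_top
    (CoprodI.closure_iUnion_image_of_eq_top (closure_boolFamilyGens_eq_top hS hT)) _

open MonoidAlgebra

theorem completeGrowthSeries_image_inl_union_image_inr (hSfin : S.Finite) (hTfin : T.Finite)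
    (hS : Submonoid.closure S = ⊤) (hT : Submonoid.closure T = ⊤) :
    completeGrowthSeries ((inl : G →* G ∗ H) '' S ∪ (inr : H →* G ∗ H) '' T) =
      PowerSeries.map
        (mapDomainRingHom ℤ ((equivCoprodI G H).symm : CoprodI (boolFamily G H) →* G ∗ H))
        (completeGrowthSeries (⋃ b, CoprodI.of '' boolFamilyGens S T b)) := by
  rw [map_completeGrowthSeries_mulEquiv
      (Set.finite_iUnion fun b => (finite_boolFamilyGens hSfin hTfin b).image _)
      (CoprodI.closure_iUnion_image_of_eq_top (closure_boolFamilyGens_eq_top hS hT)),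
    image_equivCoprodI_symm]

theorem map_inl_completeGrowthSeries (hSfin : S.Finite) (hS : Submonoid.closure S = ⊤)
    (T : Set H) :
    PowerSeries.map (mapDomainRingHom ℤ inl) (completeGrowthSeries S) =
      PowerSeries.map
        (mapDomainRingHom ℤ ((equivCoprodI G H).symm : CoprodI (boolFamily G H) →* G ∗ H))
        (PowerSeries.map (mapDomainRingHom ℤ CoprodI.of)
          (completeGrowthSeries (boolFamilyGens S T true))) := by
  rw [boolFamilyGens, ← map_completeGrowthSeries_mulEquiv hSfin hS,
    map_mapDomainRingHom_map_mapDomainRingHom, map_mapDomainRingHom_map_mapDomainRingHom,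
    MonoidHom.comp_assoc, equivCoprodI_symm_comp_of_true]

theorem map_inr_completeGrowthSeries (hTfin : T.Finite) (hT : Submonoid.closure T = ⊤)
    (S : Set G) :
    PowerSeries.map (mapDomainRingHom ℤ inr) (completeGrowthSeries T) =
      PowerSeries.map
        (mapDomainRingHom ℤ ((equivCoprodI G H).symm : CoprodI (boolFamily G H) →* G ∗ H))
        (PowerSeries.map (mapDomainRingHom ℤ CoprodI.of)
          (completeGrowthSeries (boolFamilyGens S T false))) := by
  rw [boolFamilyGens, ← map_completeGrowthSeries_mulEquiv hTfin hT,
    map_mapDomainRingHom_map_mapDomainRingHom, map_mapDomainRingHom_map_mapDomainRingHom,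
    MonoidHom.comp_assoc, equivCoprodI_symm_comp_of_false]

theorem ringInverse_completeGrowthSeries (hSfin : S.Finite) (hTfin : T.Finite)
    (hS : Submonoid.closure S = ⊤) (hT : Submonoid.closure T = ⊤) :
    Ring.inverse (completeGrowthSeries ((inl : G →* G ∗ H) '' S ∪ (inr : H →* G ∗ H) '' T)) =
      Ring.inverse (PowerSeries.map (mapDomainRingHom ℤ inl) (completeGrowthSeries S)) +
        Ring.inverse (PowerSeries.map (mapDomainRingHom ℤ inr) (completeGrowthSeries T)) -
          1 := by
  have hgen := closure_boolFamilyGens_eq_top hS hT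
  set Φ := PowerSeries.map
    (mapDomainRingHom ℤ ((equivCoprodI G H).symm : CoprodI (boolFamily G H) →* G ∗ H))
  rw [completeGrowthSeries_image_inl_union_image_inr hSfin hTfin hS hT,
    map_inl_completeGrowthSeries hSfin hS T, map_inr_completeGrowthSeries hTfin hT S,
    ← map_ringInverse_of_isUnit Φ
      (isUnit_completeGrowthSeries (CoprodI.closure_iUnion_image_of_eq_top hgen)),
    CoprodI.ringInverse_completeGrowthSeries (finite_boolFamilyGens hSfin hTfin) hgen,
    ← map_ringInverse_of_isUnit Φ (isUnit_map_completeGrowthSeries (hgen true) _),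
    ← map_ringInverse_of_isUnit Φ (isUnit_map_completeGrowthSeries (hgen false) _),
    Fintype.sum_bool, Fintype.card_bool, map_sub, map_add, map_add, map_one, map_natCast,
    Nat.cast_ofNat, ← one_add_one_eq_two]
  abel

end Monoid.Coprod

/-- **Complete growth series of a free product**: for groups `G`, `H` with finite
symmetric generating sets `S`, `T`, and the free product `G ∗ H` generated by the
images of `S` and `T`, the three series `A = CG_{G∗H}(z)`, `B = ι_G(CG_{G,S}(z))`,
`C = ι_H(CG_{H,T}(z))` have constant coefficient `1` (hence are units of the power
series ring), and `A⁻¹ = B⁻¹ + C⁻¹ − 1`. -/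
theorem completeGrowthSeries_freeProd {G H : Type*} [Group G] [Group H]
    (S : Set G) (T : Set H)
    (hSfin : S.Finite) (hTfin : T.Finite)
    (hSsym : S⁻¹ = S) (hTsym : T⁻¹ = T)
    (hSgen : Subgroup.closure S = ⊤) (hTgen : Subgroup.closure T = ⊤) :
    let A := completeGrowthSeries
      ((Monoid.Coprod.inl : G →* Monoid.Coprod G H) '' S ∪
        (Monoid.Coprod.inr : H →* Monoid.Coprod G H) '' T)
    let B := PowerSeries.map
      (MonoidAlgebra.mapDomainRingHom ℤ (Monoid.Coprod.inl : G →* Monoid.Coprod G H))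
      (completeGrowthSeries S)
    let C := PowerSeries.map
      (MonoidAlgebra.mapDomainRingHom ℤ (Monoid.Coprod.inr : H →* Monoid.Coprod G H))
      (completeGrowthSeries T)
    PowerSeries.constantCoeff A = 1 ∧
    PowerSeries.constantCoeff B = 1 ∧
    PowerSeries.constantCoeff C = 1 ∧
    IsUnit A ∧ IsUnit B ∧ IsUnit C ∧
    Ring.inverse A = Ring.inverse B + Ring.inverse C - 1 := by
  intro A B C
  have hS := Submonoid.closure_eq_top_of_inv_eq hSsym hSgen
  have hT := Submonoid.closure_eq_top_of_inv_eq hTsym hTgen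
  have hgen := Monoid.Coprod.closure_image_inl_union_image_inr_eq_top hS hT
  exact ⟨constantCoeff_completeGrowthSeries hgen, constantCoeff_map_completeGrowthSeries hS _,
    constantCoeff_map_completeGrowthSeries hT _, isUnit_completeGrowthSeries hgen,
    isUnit_map_completeGrowthSeries hS _, isUnit_map_completeGrowthSeries hT _,
    Monoid.Coprod.ringInverse_completeGrowthSeries hSfin hTfin hS hT⟩
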